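/- arXiv:1709.06301 — 2 statements merged into one kernel-verified Lean document; each statement's English description precedes it below -/
import Mathlib

section
/- Let G₁ and G₂ be simple connected graphs with n₂ = |V(G₂)| vertices in G₂ and m₁ = |E(G₁)|, m₂ = |E(G₂)| edges. Then the F-index of the edge S-join satisfies F(G₁ ∨̱_S G₂) = F(G₁) + F(G₂) + 3m₁M₁(G₂) + 6m₁²m₂ + m₁(n₂ + 2)³ + n₂m₁³. -/
/-- The subdivision graph `S(G)`: a new vertex is inserted into each edge of `G`
(each edge is replaced by a path of length 2). The inserted vertices form the
right summand `↥G.edgeSet`. -/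
def Sgraph {V : Type*} (G : SimpleGraph V) : SimpleGraph (V ⊕ ↥G.edgeSet) where
  Adj x y :=
    match x, y with
    | Sum.inl v, Sum.inr e => v ∈ (e : Sym2 V)
    | Sum.inr e, Sum.inl v => v ∈ (e : Sym2 V)
    | _, _ => False
  symm := by constructor; rintro (v | e) (w | f) h <;> exact h
  loopless := by constructor; rintro (v | e) h <;> exact h

/-- The graph `R(G)`: obtained from `G` by inserting a new vertex into each edge of `G`
and joining each new vertex to the end vertices of its corresponding edge. -/
def Rgraph {V : Type*} (G : SimpleGraph V) : SimpleGraph (V ⊕ ↥G.edgeSet) where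
  Adj x y :=
    match x, y with
    | Sum.inl v, Sum.inl w => G.Adj v w
    | Sum.inl v, Sum.inr e => v ∈ (e : Sym2 V)
    | Sum.inr e, Sum.inl v => v ∈ (e : Sym2 V)
    | Sum.inr _, Sum.inr _ => False
  symm := by
    constructor
    rintro (v | e) (w | f) h
    · exact G.adj_symm h
    · exact h
    · exact h
    · exact h
  loopless := by
    constructor
    rintro (v | e) h
    · exact G.irrefl h
    · exact h

/-- The graph `Q(G)`: obtained from `G` by inserting a new vertex into each edge of `G`,
then joining by edges those pairs of new vertices lying on adjacent edges of `G`. -/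
def Qgraph {V : Type*} (G : SimpleGraph V) : SimpleGraph (V ⊕ ↥G.edgeSet) where
  Adj x y :=
    match x, y with
    | Sum.inl _, Sum.inl _ => False
    | Sum.inl v, Sum.inr e => v ∈ (e : Sym2 V)
    | Sum.inr e, Sum.inl v => v ∈ (e : Sym2 V)
    | Sum.inr e, Sum.inr f => e ≠ f ∧ ∃ v, v ∈ (e : Sym2 V) ∧ v ∈ (f : Sym2 V)
  symm := by
    constructor
    rintro (v | e) (w | f) h
    · exact h
    · exact h
    · exact h
    · exact ⟨h.1.symm, by obtain ⟨v, h1, h2⟩ := h.2; exact ⟨v, h2, h1⟩⟩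
  loopless := by
    constructor
    rintro (v | e) h
    · exact h
    · exact h.1 rfl

/-- The total graph `T(G)`: obtained from `G` by inserting a new vertex into each edge,
joining each new vertex to the end vertices of its corresponding edge, and joining by
edges those pairs of new vertices lying on adjacent edges of `G`. -/
def Tgraph {V : Type*} (G : SimpleGraph V) : SimpleGraph (V ⊕ ↥G.edgeSet) where
  Adj x y :=
    match x, y with
    | Sum.inl v, Sum.inl w => G.Adj v w
    | Sum.inl v, Sum.inr e => v ∈ (e : Sym2 V)
    | Sum.inr e, Sum.inl v => v ∈ (e : Sym2 V)
    | Sum.inr e, Sum.inr f => e ≠ f ∧ ∃ v, v ∈ (e : Sym2 V) ∧ v ∈ (f : Sym2 V)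
  symm := by
    constructor
    rintro (v | e) (w | f) h
    · exact G.adj_symm h
    · exact h
    · exact h
    · exact ⟨h.1.symm, by obtain ⟨v, h1, h2⟩ := h.2; exact ⟨v, h2, h1⟩⟩
  loopless := by
    constructor
    rintro (v | e) h
    · exact G.irrefl h
    · exact h.1 rfl

/-- The disjoint union of `H` and `K` together with all edges joining a vertex `a` of `H`
with `P a` to every vertex of `K`. -/
def joinOn {A B : Type*} (H : SimpleGraph A) (K : SimpleGraph B) (P : A → Prop) :
    SimpleGraph (A ⊕ B) where
  Adj x y :=
    match x, y with
    | Sum.inl a, Sum.inl a' => H.Adj a a'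
    | Sum.inr b, Sum.inr b' => K.Adj b b'
    | Sum.inl a, Sum.inr _ => P a
    | Sum.inr _, Sum.inl a => P a
  symm := by
    constructor
    rintro (a | b) (a' | b') h
    · exact H.adj_symm h
    · exact h
    · exact h
    · exact K.adj_symm h
  loopless := by
    constructor
    rintro (a | b) h
    · exact H.irrefl h
    · exact K.irrefl h

/-- The vertex S-join `G₁ ∨̇_S G₂`: obtained from `S(G₁)` and `G₂` by joining each vertex
of `V(G₁)` to every vertex of `G₂`. -/
def vertexSJoin {V₁ V₂ : Type*} (G₁ : SimpleGraph V₁) (G₂ : SimpleGraph V₂) :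
    SimpleGraph ((V₁ ⊕ ↥G₁.edgeSet) ⊕ V₂) :=
  joinOn (Sgraph G₁) G₂ (fun x => x.isLeft)

/-- The edge S-join `G₁ ∨̱_S G₂`: obtained from `S(G₁)` and `G₂` by joining each inserted
vertex (each vertex of `I(G₁)`) to every vertex of `G₂`. -/
def edgeSJoin {V₁ V₂ : Type*} (G₁ : SimpleGraph V₁) (G₂ : SimpleGraph V₂) :
    SimpleGraph ((V₁ ⊕ ↥G₁.edgeSet) ⊕ V₂) :=
  joinOn (Sgraph G₁) G₂ (fun x => x.isRight)

/-- The vertex R-join `G₁ ∨̇_R G₂`. -/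
def vertexRJoin {V₁ V₂ : Type*} (G₁ : SimpleGraph V₁) (G₂ : SimpleGraph V₂) :
    SimpleGraph ((V₁ ⊕ ↥G₁.edgeSet) ⊕ V₂) :=
  joinOn (Rgraph G₁) G₂ (fun x => x.isLeft)

/-- The edge R-join `G₁ ∨̱_R G₂`. -/
def edgeRJoin {V₁ V₂ : Type*} (G₁ : SimpleGraph V₁) (G₂ : SimpleGraph V₂) :
    SimpleGraph ((V₁ ⊕ ↥G₁.edgeSet) ⊕ V₂) :=
  joinOn (Rgraph G₁) G₂ (fun x => x.isRight)

/-- The vertex Q-join `G₁ ∨̇_Q G₂`. -/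
def vertexQJoin {V₁ V₂ : Type*} (G₁ : SimpleGraph V₁) (G₂ : SimpleGraph V₂) :
    SimpleGraph ((V₁ ⊕ ↥G₁.edgeSet) ⊕ V₂) :=
  joinOn (Qgraph G₁) G₂ (fun x => x.isLeft)

/-- The edge Q-join `G₁ ∨̱_Q G₂`. -/
def edgeQJoin {V₁ V₂ : Type*} (G₁ : SimpleGraph V₁) (G₂ : SimpleGraph V₂) :
    SimpleGraph ((V₁ ⊕ ↥G₁.edgeSet) ⊕ V₂) :=
  joinOn (Qgraph G₁) G₂ (fun x => x.isRight)

/-- The vertex T-join `G₁ ∨̇_T G₂`. -/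
def vertexTJoin {V₁ V₂ : Type*} (G₁ : SimpleGraph V₁) (G₂ : SimpleGraph V₂) :
    SimpleGraph ((V₁ ⊕ ↥G₁.edgeSet) ⊕ V₂) :=
  joinOn (Tgraph G₁) G₂ (fun x => x.isLeft)

/-- The edge T-join `G₁ ∨̱_T G₂`. -/
def edgeTJoin {V₁ V₂ : Type*} (G₁ : SimpleGraph V₁) (G₂ : SimpleGraph V₂) :
    SimpleGraph ((V₁ ⊕ ↥G₁.edgeSet) ⊕ V₂) :=
  joinOn (Tgraph G₁) G₂ (fun x => x.isRight)

/-- Degree of a vertex in a graph on a finite vertex type. -/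
noncomputable def gdeg {V : Type*} [Finite V] (G : SimpleGraph V) (v : V) : ℕ :=
  haveI : Fintype ↥(G.neighborSet v) := Fintype.ofFinite _
  G.degree v

/-- The forgotten topological index (F-index): `F(G) = ∑_{v ∈ V(G)} d_G(v)³`. -/
noncomputable def Findex {V : Type*} [Finite V] (G : SimpleGraph V) : ℕ :=
  haveI := Fintype.ofFinite V
  ∑ v : V, gdeg G v ^ 3

/-- The first Zagreb index: `M₁(G) = ∑_{v ∈ V(G)} d_G(v)²`. -/
noncomputable def M1 {V : Type*} [Finite V] (G : SimpleGraph V) : ℕ :=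
  haveI := Fintype.ofFinite V
  ∑ v : V, gdeg G v ^ 2

/-- `M₄(G) = ∑_{v ∈ V(G)} d_G(v)⁴`. -/
noncomputable def M4 {V : Type*} [Finite V] (G : SimpleGraph V) : ℕ :=
  haveI := Fintype.ofFinite V
  ∑ v : V, gdeg G v ^ 4

/-- The hyper Zagreb index: `HM(G) = ∑_{uv ∈ E(G)} (d_G(u) + d_G(v))²`. -/
noncomputable def HM {V : Type*} [Finite V] (G : SimpleGraph V) : ℕ :=
  haveI : Fintype ↥G.edgeSet := Fintype.ofFinite _
  ∑ e : ↥G.edgeSet,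
    Sym2.lift ⟨fun u v => (gdeg G u + gdeg G v) ^ 2,
      fun u v => by dsimp only; rw [add_comm]⟩ (e : Sym2 V)

/-- The redefined Zagreb index:
`ReZM(G) = ∑_{uv ∈ E(G)} d_G(u) d_G(v) (d_G(u) + d_G(v))`. -/
noncomputable def ReZM {V : Type*} [Finite V] (G : SimpleGraph V) : ℕ :=
  haveI : Fintype ↥G.edgeSet := Fintype.ofFinite _
  ∑ e : ↥G.edgeSet,
    Sym2.lift ⟨fun u v => gdeg G u * gdeg G v * (gdeg G u + gdeg G v),
      fun u v => by dsimp only; ring⟩ (e : Sym2 V)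

/-- The number of edges of `G`. -/
noncomputable def numEdges {V : Type*} (G : SimpleGraph V) : ℕ :=
  Nat.card ↥G.edgeSet

/-!
In the edge S-join a vertex of `G₁` keeps its degree, an inserted vertex is adjacent to the two
ends of its edge and to all of `G₂` (degree `n₂ + 2`), and a vertex `w` of `G₂` gains the `m₁`
inserted vertices (degree `m₁ + d(w)`). Summing cubes, only the last group needs work: expand
`(m₁ + d(w))³` and use the handshake lemma `∑ d(w) = 2 m₂` for the linear term.
-/

open Finset

lemma gdeg_eq_natCard_neighborSet {V : Type*} [Finite V] (G : SimpleGraph V) (v : V) :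
    gdeg G v = Nat.card (G.neighborSet v) := by
  let := Fintype.ofFinite (G.neighborSet v)
  exact (Nat.card_eq_fintype_card.trans (G.card_neighborSet_eq_degree v)).symm

lemma sum_gdeg_eq_two_mul_numEdges {V : Type*} [Fintype V] (G : SimpleGraph V) :
    ∑ v, gdeg G v = 2 * numEdges G := by
  classical
  simp only [gdeg_eq_natCard_neighborSet, Nat.card_eq_fintype_card,
    SimpleGraph.card_neighborSet_eq_degree]
  rw [SimpleGraph.sum_degrees_eq_twice_card_edges, numEdges, Nat.card_eq_fintype_card,
    SimpleGraph.edgeFinset_card]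

lemma Findex_eq_sum {V : Type*} [Fintype V] (G : SimpleGraph V) :
    Findex G = ∑ v, gdeg G v ^ 3 := by
  rw [Findex]; congr!

lemma M1_eq_sum {V : Type*} [Fintype V] (G : SimpleGraph V) :
    M1 G = ∑ v, gdeg G v ^ 2 := by
  rw [M1]; congr!

lemma sum_add_gdeg_pow_three {V : Type*} [Fintype V] (G : SimpleGraph V) (c : ℕ) :
    ∑ v, (c + gdeg G v) ^ 3
      = Findex G + 3 * c * M1 G + 6 * c ^ 2 * numEdges G + Fintype.card V * c ^ 3 := by
  have hexpand : ∀ d : ℕ, (c + d) ^ 3 = d ^ 3 + 3 * c * d ^ 2 + 3 * c ^ 2 * d + c ^ 3 :=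
    fun d => by ring
  simp only [hexpand, sum_add_distrib, ← mul_sum, sum_const, card_univ, smul_eq_mul,
    sum_gdeg_eq_two_mul_numEdges, Findex_eq_sum, M1_eq_sum]
  ring

section joinOn

variable {A B : Type*} [Finite A] [Finite B] (H : SimpleGraph A) (K : SimpleGraph B)
  (P : A → Prop)

lemma gdeg_joinOn_inl (a : A) [Decidable (P a)] :
    gdeg (joinOn H K P) (.inl a) = gdeg H a + if P a then Nat.card B else 0 := by
  rw [gdeg_eq_natCard_neighborSet, gdeg_eq_natCard_neighborSet,
    Nat.card_congr Equiv.subtypeSum, Nat.card_sum]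
  congr 1
  split_ifs with h <;> simp [joinOn, h]

lemma gdeg_joinOn_inr (b : B) :
    gdeg (joinOn H K P) (.inr b) = Nat.card {a // P a} + gdeg K b := by
  rw [gdeg_eq_natCard_neighborSet, gdeg_eq_natCard_neighborSet]
  exact (Nat.card_congr Equiv.subtypeSum).trans Nat.card_sum

end joinOn

section Sgraph

variable {V : Type*} [Finite V] (G : SimpleGraph V)

lemma gdeg_Sgraph_inl (v : V) : gdeg (Sgraph G) (.inl v) = gdeg G v := by
  classical
  rw [gdeg_eq_natCard_neighborSet, gdeg_eq_natCard_neighborSet,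
    Nat.card_congr Equiv.subtypeSum, Nat.card_sum]
  have : IsEmpty {w : V // .inl w ∈ (Sgraph G).neighborSet (.inl v)} := ⟨fun w => w.2⟩
  rw [Nat.card_of_isEmpty, zero_add]
  exact Nat.card_congr ((Equiv.subtypeSubtypeEquivSubtypeInter _ _).trans
    (G.incidenceSetEquivNeighborSet v))

lemma gdeg_Sgraph_inr (e : G.edgeSet) : gdeg (Sgraph G) (.inr e) = 2 := by
  rw [gdeg_eq_natCard_neighborSet, Nat.card_congr Equiv.subtypeSum, Nat.card_sum]
  have : IsEmpty {f : G.edgeSet // .inr f ∈ (Sgraph G).neighborSet (.inr e)} := ⟨fun f => f.2⟩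
  rw [Nat.card_of_isEmpty (α := {f : G.edgeSet // _}), add_zero]
  obtain ⟨e, he⟩ := e
  induction e using Sym2.ind with
  | h a b =>
    rw [← Set.ncard_pair (G.ne_of_adj he), ← Nat.card_coe_set_eq]
    exact Nat.card_congr (Equiv.subtypeEquivRight fun w => by simp [Sgraph])

end Sgraph

section edgeSJoin

variable {V₁ V₂ : Type*} [Finite V₁] [Finite V₂] (G₁ : SimpleGraph V₁) (G₂ : SimpleGraph V₂)

lemma gdeg_edgeSJoin_inl_inl (v : V₁) :
    gdeg (edgeSJoin G₁ G₂) (.inl (.inl v)) = gdeg G₁ v := by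
  rw [edgeSJoin, gdeg_joinOn_inl, gdeg_Sgraph_inl]
  simp

lemma gdeg_edgeSJoin_inl_inr (e : G₁.edgeSet) :
    gdeg (edgeSJoin G₁ G₂) (.inl (.inr e)) = Nat.card V₂ + 2 := by
  rw [edgeSJoin, gdeg_joinOn_inl, gdeg_Sgraph_inr]
  simp [add_comm]

lemma gdeg_edgeSJoin_inr (w : V₂) :
    gdeg (edgeSJoin G₁ G₂) (.inr w) = numEdges G₁ + gdeg G₂ w := by
  rw [edgeSJoin, gdeg_joinOn_inr]
  exact congrArg (· + _) (Nat.card_congr Equiv.sumIsRight)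

end edgeSJoin

theorem Findex_edgeSJoin_general {V₁ V₂ : Type*} [Finite V₁] [Finite V₂]
    (G₁ : SimpleGraph V₁) (G₂ : SimpleGraph V₂)
    (n₂ m₁ m₂ : ℕ)
    (hn₂ : n₂ = Nat.card V₂)
    (hm₁ : m₁ = numEdges G₁) (hm₂ : m₂ = numEdges G₂) :
    (Findex (edgeSJoin G₁ G₂) : ℤ) =
      (Findex G₁ : ℤ) + (Findex G₂ : ℤ) + 3 * (m₁ : ℤ) * (M1 G₂ : ℤ)
        + 6 * (m₁ : ℤ) ^ 2 * (m₂ : ℤ) + (m₁ : ℤ) * ((n₂ : ℤ) + 2) ^ 3 + (n₂ : ℤ) * (m₁ : ℤ) ^ 3 := by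
  have := Fintype.ofFinite V₁
  have := Fintype.ofFinite V₂
  have := Fintype.ofFinite G₁.edgeSet
  have hsplit : Findex (edgeSJoin G₁ G₂)
      = Findex G₁ + m₁ * (n₂ + 2) ^ 3 + ∑ w, (m₁ + gdeg G₂ w) ^ 3 := by
    simp only [Findex_eq_sum, Fintype.sum_sum_type, gdeg_edgeSJoin_inl_inl,
      gdeg_edgeSJoin_inl_inr, gdeg_edgeSJoin_inr, sum_const, card_univ, smul_eq_mul, hn₂, hm₁,
      numEdges, Nat.card_eq_fintype_card]
  rw [hsplit, sum_add_gdeg_pow_three, ← hm₂, ← Nat.card_eq_fintype_card, ← hn₂]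
  push_cast
  ring

theorem Findex_edgeSJoin {V₁ V₂ : Type*} [Finite V₁] [Finite V₂]
    (G₁ : SimpleGraph V₁) (G₂ : SimpleGraph V₂)
    (hc₁ : G₁.Connected) (hc₂ : G₂.Connected)
    (n₂ m₁ m₂ : ℕ)
    (hn₂ : n₂ = Nat.card V₂)
    (hm₁ : m₁ = numEdges G₁) (hm₂ : m₂ = numEdges G₂) :
    (Findex (edgeSJoin G₁ G₂) : ℤ) =
      (Findex G₁ : ℤ) + (Findex G₂ : ℤ) + 3 * (m₁ : ℤ) * (M1 G₂ : ℤ)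
        + 6 * (m₁ : ℤ) ^ 2 * (m₂ : ℤ) + (m₁ : ℤ) * ((n₂ : ℤ) + 2) ^ 3 + (n₂ : ℤ) * (m₁ : ℤ) ^ 3 :=
  Findex_edgeSJoin_general G₁ G₂ n₂ m₁ m₂ hn₂ hm₁ hm₂
end

section
/- For integers n, m ≥ 2, the F-index of the vertex S-join of the path P_n and the path P_m is F(P_n ∨̇_S P_m) = (mn − 6)(m² + n²) + 6mn(m + n) + 24mn − 10m − 2n − 36. -/
/-! In `P_n ∨̇_S P_m` a vertex `v` of `P_n` has degree `d_{P_n}(v) + m`, a subdivision vertex has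
degree 2, and a vertex `w` of `P_m` has degree `n + d_{P_m}(w)`. Each path has two end vertices of
degree 1 and all other vertices of degree 2, and `P_n` has `n - 1` edges, so summing the cubes of
these degrees gives a polynomial in `n` and `m`. -/

open SimpleGraph

theorem Set.ncard_eq_ncard_preimage_inl_add_ncard_preimage_inr {α β : Type*} [Finite α]
    [Finite β] (s : Set (α ⊕ β)) :
    s.ncard = (Sum.inl ⁻¹' s).ncard + (Sum.inr ⁻¹' s).ncard := by
  conv_lhs => rw [← Set.image_preimage_inl_union_image_preimage_inr s]
  rw [Set.ncard_union_eq Set.disjoint_image_inl_image_inr,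
    Set.ncard_image_of_injective _ Sum.inl_injective,
    Set.ncard_image_of_injective _ Sum.inr_injective]

namespace SimpleGraph

variable {V : Type*}

theorem gdeg_eq_ncard_neighborSet [Finite V] (G : SimpleGraph V) (v : V) :
    gdeg G v = (G.neighborSet v).ncard := by
  let := Fintype.ofFinite (G.neighborSet v)
  rw [gdeg, Set.ncard_eq_toFinset_card', Set.toFinset_card, card_neighborSet_eq_degree]

theorem Findex_eq_sum_ncard_neighborSet_pow [Fintype V] (G : SimpleGraph V) :
    Findex G = ∑ v, (G.neighborSet v).ncard ^ 3 := by
  rw [Findex, Subsingleton.elim (Fintype.ofFinite V) ‹_›]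
  simp only [gdeg_eq_ncard_neighborSet]

theorem ncard_setOf_mem_edge_eq_ncard_neighborSet (G : SimpleGraph V) (v : V) :
    {e : G.edgeSet | v ∈ (e : Sym2 V)}.ncard = (G.neighborSet v).ncard := by
  classical
  let incident : {e : G.edgeSet | v ∈ (e : Sym2 V)} ≃ G.incidenceSet v :=
    { toFun := fun e => ⟨e.1.1, e.1.2, e.2⟩
      invFun := fun e => ⟨⟨e.1, e.2.1⟩, e.2.2⟩ }
  rw [← Nat.card_coe_set_eq, ← Nat.card_coe_set_eq,
    Nat.card_congr (incident.trans (G.incidenceSetEquivNeighborSet v))]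

theorem ncard_coe_edge (G : SimpleGraph V) (e : G.edgeSet) :
    ((e : Sym2 V) : Set V).ncard = 2 := by
  obtain ⟨e, he⟩ := e
  induction e using Sym2.ind with
  | _ u w => rw [Sym2.coe_mk, Set.ncard_pair (G.ne_of_adj he)]

theorem sum_ncard_neighborSet [Fintype V] (G : SimpleGraph V) :
    ∑ v, (G.neighborSet v).ncard = 2 * G.edgeSet.ncard := by
  classical
  simp only [Set.ncard_eq_toFinset_card', Set.toFinset_card, card_neighborSet_eq_degree]
  rw [sum_degrees_eq_twice_card_edges, edgeFinset, Set.toFinset_card]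

end SimpleGraph

section vertexSJoin

variable {V₁ V₂ : Type*} (G₁ : SimpleGraph V₁) (G₂ : SimpleGraph V₂)

theorem ncard_neighborSet_vertexSJoin_inl_inl [Finite V₁] [Finite V₂] (a : V₁) :
    ((vertexSJoin G₁ G₂).neighborSet (.inl (.inl a))).ncard =
      (G₁.neighborSet a).ncard + Nat.card V₂ := by
  rw [Set.ncard_eq_ncard_preimage_inl_add_ncard_preimage_inr,
    Set.ncard_eq_ncard_preimage_inl_add_ncard_preimage_inr (Sum.inl ⁻¹' _)]
  simp [vertexSJoin, joinOn, Sgraph, Set.preimage, mem_neighborSet,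
    ncard_setOf_mem_edge_eq_ncard_neighborSet]

theorem ncard_neighborSet_vertexSJoin_inl_inr [Finite V₁] [Finite V₂] (e : G₁.edgeSet) :
    ((vertexSJoin G₁ G₂).neighborSet (.inl (.inr e))).ncard = 2 := by
  rw [Set.ncard_eq_ncard_preimage_inl_add_ncard_preimage_inr,
    Set.ncard_eq_ncard_preimage_inl_add_ncard_preimage_inr (Sum.inl ⁻¹' _)]
  simp [vertexSJoin, joinOn, Sgraph, Set.preimage, mem_neighborSet, ncard_coe_edge]

theorem ncard_neighborSet_vertexSJoin_inr [Finite V₁] [Finite V₂] (b : V₂) :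
    ((vertexSJoin G₁ G₂).neighborSet (.inr b)).ncard =
      Nat.card V₁ + (G₂.neighborSet b).ncard := by
  rw [Set.ncard_eq_ncard_preimage_inl_add_ncard_preimage_inr,
    Set.ncard_eq_ncard_preimage_inl_add_ncard_preimage_inr (Sum.inl ⁻¹' _)]
  simp [vertexSJoin, joinOn, Sgraph, Set.preimage, mem_neighborSet]
  rfl

theorem Findex_vertexSJoin [Fintype V₁] [Fintype V₂] :
    Findex (vertexSJoin G₁ G₂) =
      ∑ a, ((G₁.neighborSet a).ncard + Fintype.card V₂) ^ 3 + 8 * G₁.edgeSet.ncard +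
        ∑ b, (Fintype.card V₁ + (G₂.neighborSet b).ncard) ^ 3 := by
  classical
  simp only [Findex_eq_sum_ncard_neighborSet_pow, Fintype.sum_sum_type,
    ncard_neighborSet_vertexSJoin_inl_inl, ncard_neighborSet_vertexSJoin_inl_inr,
    ncard_neighborSet_vertexSJoin_inr, Nat.card_eq_fintype_card, Finset.sum_const,
    Finset.card_univ, smul_eq_mul]
  rw [Set.ncard_eq_toFinset_card' G₁.edgeSet, Set.toFinset_card]
  ring

end vertexSJoin

namespace SimpleGraph

theorem ncard_neighborSet_pathGraph_zero (k : ℕ) :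
    ((pathGraph (k + 2)).neighborSet 0).ncard = 1 := by
  rw [Set.ncard_eq_one]
  refine ⟨1, Set.ext fun w => ?_⟩
  simp only [mem_neighborSet, pathGraph_adj, Set.mem_singleton_iff, Fin.ext_iff, Fin.val_zero,
    Fin.val_one]
  omega

theorem ncard_neighborSet_pathGraph_last (k : ℕ) :
    ((pathGraph (k + 2)).neighborSet (Fin.last (k + 1))).ncard = 1 := by
  rw [Set.ncard_eq_one]
  refine ⟨(Fin.last k).castSucc, Set.ext fun w => ?_⟩
  simp [pathGraph_adj, Fin.ext_iff]
  omega

theorem ncard_neighborSet_pathGraph_of_pos_of_lt {n : ℕ} (i : Fin n) (h0 : 0 < i.1)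
    (h1 : i.1 + 1 < n) : ((pathGraph n).neighborSet i).ncard = 2 := by
  rw [Set.ncard_eq_two]
  refine ⟨⟨i.1 - 1, by omega⟩, ⟨i.1 + 1, h1⟩, by simp [Fin.ext_iff],
    Set.ext fun w => ?_⟩
  simp [pathGraph_adj, Fin.ext_iff]
  omega

theorem sum_pathGraph_ncard_neighborSet {M : Type*} [AddCommMonoid M] (f : ℕ → M) (k : ℕ) :
    ∑ i : Fin (k + 2), f ((pathGraph (k + 2)).neighborSet i).ncard = 2 • f 1 + k • f 2 := by
  have interior (j : Fin k) :
      f ((pathGraph (k + 2)).neighborSet j.castSucc.succ).ncard = f 2 := by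
    rw [ncard_neighborSet_pathGraph_of_pos_of_lt _ (by simp) (by simp)]
  rw [Fin.sum_univ_succ, Fin.sum_univ_castSucc, Fin.succ_last, ncard_neighborSet_pathGraph_zero,
    ncard_neighborSet_pathGraph_last, Finset.sum_congr rfl fun j _ => interior j,
    Finset.sum_const, Finset.card_univ, Fintype.card_fin]
  abel

theorem ncard_edgeSet_pathGraph (k : ℕ) : (pathGraph (k + 2)).edgeSet.ncard = k + 1 := by
  have handshake := (pathGraph (k + 2)).sum_ncard_neighborSet
  have degree_sum := sum_pathGraph_ncard_neighborSet id k
  simp only [id, smul_eq_mul] at degree_sum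
  omega

end SimpleGraph

theorem Findex_vertexSJoin_ex8 (n m : ℕ) (hn : 2 ≤ n) (hm : 2 ≤ m) :
    (Findex (vertexSJoin (SimpleGraph.pathGraph n) (SimpleGraph.pathGraph m)) : ℤ) =
      ((m : ℤ) * (n : ℤ) - 6) * ((m : ℤ) ^ 2 + (n : ℤ) ^ 2) + 6 * (m : ℤ) * (n : ℤ) * ((m : ℤ) + (n : ℤ)) + 24 * (m : ℤ) * (n : ℤ) - 10 * (m : ℤ) - 2 * (n : ℤ) - 36 := by
  obtain ⟨k, rfl⟩ : ∃ k, n = k + 2 := ⟨n - 2, by omega⟩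
  obtain ⟨l, rfl⟩ : ∃ l, m = l + 2 := ⟨m - 2, by omega⟩
  rw [Findex_vertexSJoin, sum_pathGraph_ncard_neighborSet (fun d => (d + _) ^ 3),
    sum_pathGraph_ncard_neighborSet (fun d => (_ + d) ^ 3), ncard_edgeSet_pathGraph,
    Fintype.card_fin, Fintype.card_fin]
  push_cast [smul_eq_mul]
  ring
end
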